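/- Let (X,d) be a Heine–Borel metric space, p ≥ 1, μ ∈ P_p(X), k ∈ ℕ, and R ⊆ X closed, such that (μ,k,R) is non-singular (i.e., m_{1,p}(μ,R) > ⋯ > m_{k,p}(μ,R)). Then C_p(μ,k,R) is a nonempty compact subset of the space K(X) of nonempty compact subsets of X equipped with the Hausdorff metric. -/

import Mathlib

open Filter MeasureTheory Topology TopologicalSpace Metric Set

noncomputable section

/-- Kuratowski lower limit of a sequence of sets. -/
def KurLi {Y : Type*} [TopologicalSpace Y] (A : ℕ → Set Y) : Set Y :=
  {x | ∀ U ∈ nhds x, ∀ᶠ n in atTop, (U ∩ A n).Nonempty}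

/-- Kuratowski upper limit of a sequence of sets. -/
def KurLs {Y : Type*} [TopologicalSpace Y] (A : ℕ → Set Y) : Set Y :=
  {x | ∀ U ∈ nhds x, ∃ᶠ n in atTop, (U ∩ A n).Nonempty}

variable {X : Type*} [MetricSpace X] [MeasurableSpace X]

/-- The clustering cost `W_p(S,μ) = ∫ d(y,S)^p dμ(y)`. -/
def Wp (p : ℝ) (S : Set X) (μ : Measure X) : ℝ :=
  ∫ y, infDist y S ^ p ∂μ

/-- `μ` has a finite `p`-th moment. -/
def FinMom (p : ℝ) (μ : Measure X) : Prop :=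
  ∃ x : X, Integrable (fun y => dist x y ^ p) μ

/-- Convergence in the `p`-Wasserstein topology: weak convergence together with
convergence of the `p`-th moments about some point. -/
def WassTendsto (p : ℝ) (μ : ℕ → Measure X) (ν : Measure X) : Prop :=
  (∀ f : BoundedContinuousFunction X ℝ,
      Tendsto (fun n => ∫ y, f y ∂ μ n) atTop (𝓝 (∫ y, f y ∂ ν))) ∧
  ∃ x : X, Tendsto (fun n => ∫ y, dist x y ^ p ∂ μ n) atTop (𝓝 (∫ y, dist x y ^ p ∂ ν))

/-- `S` is a feasible set of cluster centers: a nonempty finite subset of `R`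
with at most `k` points. -/
def Feas (k : ℕ) (R S : Set X) : Prop :=
  S ⊆ R ∧ S.Finite ∧ S.Nonempty ∧ S.ncard ≤ k

/-- The optimal clustering cost `m_{k,p}(μ,R)`. -/
def mCost (p : ℝ) (μ : Measure X) (k : ℕ) (R : Set X) : ℝ :=
  sInf ((fun S => Wp p S μ) '' {S | Feas k R S})

/-- The set of optimal cluster-center sets `C_p(μ,k,R)`, viewed as a subset of the
hyperspace of nonempty compact subsets of `X` with the Hausdorff metric. -/
def Cp (p : ℝ) (μ : Measure X) (k : ℕ) (R : Set X) : Set (NonemptyCompacts X) :=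
  {S | Feas k R (S : Set X) ∧ ∀ T : Set X, Feas k R T → Wp p (S : Set X) μ ≤ Wp p T μ}

/-- The support of a measure on a metric space. -/
def measSupp (μ : Measure X) : Set X :=
  {x | ∀ r : ℝ, 0 < r → μ (Metric.ball x r) ≠ 0}

/-!
Non-singularity confines all near-optimal centre sets to one ball around a point `x₀`. A
near-optimal set has a centre within some radius `r₀` of `x₀`, since otherwise the mass of a
fixed ball would be served from far away. A centre farther than `2N + r₀` from `x₀` is then the
nearest centre only for points outside `ball x₀ N`, so deleting it costs at most the `p`-th moment
tail outside that ball; for large `N` this is smaller than the gap `m_{k-1} - m_k`, so the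
remaining `k - 1` centres would cost less than `m_{k-1}`. Near-optimal sets are therefore
ranges of `k`-tuples in a compact set, and the cost is continuous for the Hausdorff metric
(dominated convergence), so the minimizers form a nonempty closed subset of a compact set.
-/

namespace Real

lemma add_rpow_le_two_rpow_mul_rpow_add_rpow {p a b : ℝ} (hp : 0 ≤ p) (ha : 0 ≤ a)
    (hb : 0 ≤ b) : (a + b) ^ p ≤ 2 ^ p * (a ^ p + b ^ p) := calc
  (a + b) ^ p ≤ (2 * max a b) ^ p := by
    gcongr
    rw [two_mul]
    exact add_le_add (le_max_left a b) (le_max_right a b)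
  _ = 2 ^ p * max a b ^ p := mul_rpow zero_le_two (ha.trans (le_max_left a b))
  _ ≤ 2 ^ p * (a ^ p + b ^ p) := by
    gcongr
    rcases le_total a b with h | h
    · rw [max_eq_right h]; linarith [rpow_nonneg ha p]
    · rw [max_eq_left h]; linarith [rpow_nonneg hb p]

end Real

namespace TopologicalSpace.NonemptyCompacts

variable {α ι : Type*} [MetricSpace α]

def ofRange [Finite ι] [Nonempty ι] (x : ι → α) : NonemptyCompacts α :=
  ⟨⟨range x, (finite_range x).isCompact⟩, range_nonempty x⟩

@[simp]
lemma coe_ofRange [Finite ι] [Nonempty ι] (x : ι → α) : (ofRange x : Set α) = range x := rfl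

lemma lipschitzWith_ofRange [Fintype ι] [Nonempty ι] :
    LipschitzWith 1 (ofRange : (ι → α) → NonemptyCompacts α) := by
  refine LipschitzWith.of_dist_le_mul fun x x' => ?_
  rw [NNReal.coe_one, one_mul, NonemptyCompacts.dist_eq, coe_ofRange, coe_ofRange]
  refine hausdorffDist_le_of_infDist dist_nonneg ?_ ?_ <;> rintro _ ⟨i, rfl⟩
  · exact (infDist_le_dist_of_mem (mem_range_self i)).trans (dist_le_pi_dist x x' i)
  · rw [dist_comm x x']
    exact (infDist_le_dist_of_mem (mem_range_self i)).trans (dist_le_pi_dist x' x i)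

end TopologicalSpace.NonemptyCompacts

lemma Set.Finite.exists_fin_range_eq {α : Type*} {S : Set α} (hfin : S.Finite)
    (hne : S.Nonempty) {k : ℕ} (hk : S.ncard ≤ k) : ∃ x : Fin k → α, range x = S := by
  have := hfin.fintype
  have := hne.to_subtype
  obtain ⟨e⟩ : Nonempty (S ↪ Fin k) := Function.Embedding.nonempty_of_card_le (by
    rwa [Fintype.card_fin, ← Nat.card_eq_fintype_card, Nat.card_coe_set_eq])
  refine ⟨(↑) ∘ Function.invFun e, ?_⟩
  rw [range_comp, (Function.invFun_surjective e.injective).range_eq, image_univ,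
    Subtype.range_coe]

lemma IsCompact.nonempty_and_isCompact_setOf_isMinOn {α β : Type*} [TopologicalSpace α]
    [LinearOrder β] [TopologicalSpace β] [ClosedIicTopology β] {f : α → β} {F A : Set α}
    {c : β} (hf : Continuous f) (hA : IsCompact A) (hAF : A ⊆ F)
    (hsub : ∀ x ∈ F, f x < c → x ∈ A) (hc : ∃ x ∈ F, f x < c) :
    {x | x ∈ F ∧ IsMinOn f F x}.Nonempty ∧ IsCompact {x | x ∈ F ∧ IsMinOn f F x} := by
  obtain ⟨x₀, hx₀F, hx₀c⟩ := hc
  obtain ⟨a, haA, ha⟩ := hA.exists_isMinOn ⟨x₀, hsub x₀ hx₀F hx₀c⟩ hf.continuousOn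
  have hac : f a < c := (ha (hsub x₀ hx₀F hx₀c)).trans_lt hx₀c
  have hmin : IsMinOn f F a := fun y hyF => by
    by_cases hy : f y < c
    · exact ha (hsub y hyF hy)
    · exact hac.le.trans (not_lt.1 hy)
  have heq : {x | x ∈ F ∧ IsMinOn f F x} = A ∩ f ⁻¹' Iic (f a) := by
    ext x
    refine ⟨fun ⟨hxF, hx⟩ => ⟨hsub x hxF ((hx (hAF haA)).trans_lt hac), hx (hAF haA)⟩,
      fun ⟨hxA, hxa⟩ => ⟨hAF hxA, fun y hy => le_trans hxa (hmin hy)⟩⟩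
  exact ⟨⟨a, hAF haA, hmin⟩, heq ▸ hA.inter_right (isClosed_Iic.preimage hf)⟩

section Feasible

variable {α : Type*} {k : ℕ} {R : Set α}

lemma feas_singleton (hk : 1 ≤ k) {x : α} (hx : x ∈ R) : Feas k R {x} :=
  ⟨singleton_subset_iff.2 hx, finite_singleton x, singleton_nonempty x, by
    rwa [ncard_singleton]⟩

lemma Feas.exists_nonemptyCompacts [TopologicalSpace α] {S : Set α} (hS : Feas k R S) :
    ∃ K : NonemptyCompacts α, (K : Set α) = S :=
  ⟨⟨⟨S, hS.2.1.isCompact⟩, hS.2.2.1⟩, rfl⟩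

variable [MetricSpace α]

lemma isCompact_setOf_feas_subset_closedBall [ProperSpace α] (hk : 1 ≤ k) (hR : IsClosed R)
    (x₀ : α) (r : ℝ) :
    IsCompact {S : NonemptyCompacts α | Feas k R S ∧ (S : Set α) ⊆ closedBall x₀ r} := by
  have : Nonempty (Fin k) := ⟨⟨0, hk⟩⟩
  have heq : {S : NonemptyCompacts α | Feas k R S ∧ (S : Set α) ⊆ closedBall x₀ r} =
      NonemptyCompacts.ofRange '' univ.pi fun _ : Fin k => closedBall x₀ r ∩ R := by
    ext S
    constructor
    · rintro ⟨hS, hSr⟩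
      obtain ⟨x, hx⟩ := hS.2.1.exists_fin_range_eq hS.2.2.1 hS.2.2.2
      refine ⟨x, fun i _ => ?_, NonemptyCompacts.ext hx⟩
      have hxi : x i ∈ (S : Set α) := hx ▸ mem_range_self i
      exact ⟨hSr hxi, hS.1 hxi⟩
    · rintro ⟨x, hx, rfl⟩
      have hxi : ∀ i, x i ∈ closedBall x₀ r ∩ R := fun i => hx i (mem_univ i)
      refine ⟨⟨range_subset_iff.2 fun i => (hxi i).2, finite_range x, range_nonempty x, ?_⟩,
        range_subset_iff.2 fun i => (hxi i).1⟩
      simpa [Nat.card_coe_set_eq] using Finite.card_range_le x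
  rw [heq]
  exact (isCompact_univ_pi fun _ => (isCompact_closedBall x₀ r).inter_right hR).image
    NonemptyCompacts.lipschitzWith_ofRange.continuous

end Feasible

section Clustering

variable {p : ℝ} {μ : Measure X} {k : ℕ} {R : Set X}

namespace FinMom

variable [OpensMeasurableSpace X] [IsFiniteMeasure μ]

lemma integrable_dist_add_rpow (hμ : FinMom p μ) (hp : 0 ≤ p) (z : X) {c : ℝ} (hc : 0 ≤ c) :
    Integrable (fun y => (dist y z + c) ^ p) μ := by
  obtain ⟨x, hx⟩ := hμ
  refine Integrable.mono' ((hx.add (integrable_const ((dist x z + c) ^ p))).const_mul (2 ^ p))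
    (((continuous_id.dist continuous_const).add continuous_const).rpow_const
      fun _ => Or.inr hp).aestronglyMeasurable (ae_of_all _ fun y => ?_)
  rw [Real.norm_of_nonneg (by positivity)]
  calc (dist y z + c) ^ p ≤ (dist x y + (dist x z + c)) ^ p :=
        Real.rpow_le_rpow (by positivity) (by linarith [dist_triangle_left y z x]) hp
    _ ≤ _ := Real.add_rpow_le_two_rpow_mul_rpow_add_rpow hp dist_nonneg (by positivity)

lemma integrable_infDist_rpow (hμ : FinMom p μ) (hp : 0 ≤ p) {S : Set X} (hS : S.Nonempty) :
    Integrable (fun y => infDist y S ^ p) μ := by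
  obtain ⟨s, hs⟩ := hS
  refine (hμ.integrable_dist_add_rpow hp s le_rfl).mono'
    ((continuous_infDist_pt S).rpow_const fun _ => Or.inr hp).aestronglyMeasurable
    (ae_of_all _ fun y => ?_)
  rw [Real.norm_of_nonneg (Real.rpow_nonneg infDist_nonneg p), add_zero]
  exact Real.rpow_le_rpow infDist_nonneg (infDist_le_dist_of_mem hs) hp

end FinMom

lemma Wp_nonneg (p : ℝ) (S : Set X) (μ : Measure X) : 0 ≤ Wp p S μ :=
  integral_nonneg fun _ => Real.rpow_nonneg infDist_nonneg p

lemma mCost_le_Wp {S : Set X} (hS : Feas k R S) : mCost p μ k R ≤ Wp p S μ :=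
  csInf_le ⟨0, by rintro _ ⟨T, -, rfl⟩; exact Wp_nonneg p T μ⟩ ⟨S, hS, rfl⟩

lemma exists_Wp_lt_mCost_add (hk : 1 ≤ k) (hR : R.Nonempty) {δ : ℝ} (hδ : 0 < δ) :
    ∃ S, Feas k R S ∧ Wp p S μ < mCost p μ k R + δ := by
  obtain ⟨x, hx⟩ := hR
  obtain ⟨_, ⟨S, hS, rfl⟩, hlt⟩ := Real.lt_sInf_add_pos
    (s := (fun S => Wp p S μ) '' {S | Feas k R S}) ⟨_, {x}, feas_singleton hk hx, rfl⟩ hδ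
  exact ⟨S, hS, hlt⟩

lemma exists_pos_mCost_add_le_Wp (hk : 1 ≤ k)
    (hns : ∀ j : ℕ, 1 ≤ j → j < k → mCost p μ (j + 1) R < mCost p μ j R) :
    ∃ ε > 0, ∀ T, Feas (k - 1) R T → mCost p μ k R + ε ≤ Wp p T μ := by
  obtain ⟨j, rfl⟩ : ∃ j, k = j + 1 := ⟨k - 1, by omega⟩
  rcases Nat.eq_zero_or_pos j with rfl | hj
  · -- for `k = 1` nothing is feasible with `k - 1 = 0` centres
    refine ⟨1, one_pos, fun T ⟨_, hfin, hne, hcard⟩ => absurd hcard ?_⟩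
    have := (ncard_pos hfin).2 hne
    omega
  · refine ⟨mCost p μ j R - mCost p μ (j + 1) R, sub_pos.2 (hns j hj (by omega)),
      fun T hT => ?_⟩
    rw [Nat.add_sub_cancel] at hT
    linarith [mCost_le_Wp (p := p) (μ := μ) hT]

lemma mul_measureReal_ball_le_Wp [OpensMeasurableSpace X] [IsFiniteMeasure μ]
    (hμ : FinMom p μ) (hp : 0 ≤ p) {S : Set X} (hS : S.Nonempty) {x₀ : X} {r ρ : ℝ}
    (hρ : 0 ≤ ρ) (hfar : ∀ s ∈ S, r + ρ ≤ dist s x₀) :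
    ρ ^ p * μ.real (ball x₀ r) ≤ Wp p S μ := by
  have hint := hμ.integrable_infDist_rpow hp hS
  calc ρ ^ p * μ.real (ball x₀ r) ≤ ∫ y in ball x₀ r, infDist y S ^ p ∂μ := by
        refine setIntegral_ge_of_const_le_real measurableSet_ball (measure_ne_top μ _)
          (fun y hy => ?_) hint.integrableOn
        gcongr
        refine (le_infDist hS).2 fun s hs => ?_
        linarith [hfar s hs, mem_ball.1 hy, dist_triangle_left s x₀ y]
    _ ≤ Wp p S μ :=
        setIntegral_le_integral hint (ae_of_all _ fun _ => Real.rpow_nonneg infDist_nonneg p)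

lemma exists_dist_le_of_Wp_le [OpensMeasurableSpace X] [IsFiniteMeasure μ] [NeZero μ]
    (hμ : FinMom p μ) (hp : 0 < p) (x₀ : X) (c : ℝ) :
    ∃ r₀, 0 ≤ r₀ ∧ ∀ S : Set X, S.Nonempty → Wp p S μ ≤ c → ∃ t ∈ S, dist t x₀ ≤ r₀ := by
  obtain ⟨n, hn⟩ := exists_pos_ball (μ := μ) x₀ (NeZero.ne μ)
  have hβ : 0 < μ.real (ball x₀ n) := ENNReal.toReal_pos hn.ne' (measure_ne_top μ _)
  set ρ := (|c| / μ.real (ball x₀ n) + 1) ^ p⁻¹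
  have hρ : 0 ≤ ρ := by positivity
  have hcρ : c < ρ ^ p * μ.real (ball x₀ n) := by
    rw [Real.rpow_inv_rpow (by positivity) hp.ne', add_mul, div_mul_cancel₀ _ hβ.ne']
    linarith [le_abs_self c]
  refine ⟨n + ρ, by positivity, fun S hS hW => ?_⟩
  by_contra! hfar
  exact (hcρ.trans_le (mul_measureReal_ball_le_Wp hμ hp.le hS hρ fun s hs =>
    (hfar s hs).le)).not_ge hW

lemma exists_setIntegral_compl_ball_lt [OpensMeasurableSpace X] {f : X → ℝ}
    (hf : Integrable f μ) (x₀ : X) {ε : ℝ} (hε : 0 < ε) :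
    ∃ N : ℕ, ∫ y in (ball x₀ N)ᶜ, f y ∂μ < ε := by
  have h := tendsto_setIntegral_of_antitone (μ := μ) (f := f)
    (s := fun n : ℕ => (ball x₀ n)ᶜ) (fun _ => measurableSet_ball.compl)
    (fun _ _ hmn => compl_subset_compl.2 (ball_subset_ball (by exact_mod_cast hmn)))
    ⟨0, hf.integrableOn⟩
  rw [← compl_iUnion, iUnion_ball_nat, compl_univ, Measure.restrict_empty,
    integral_zero_measure] at h
  exact (h.eventually (gt_mem_nhds hε)).exists

lemma Wp_diff_singleton_le [OpensMeasurableSpace X] [IsFiniteMeasure μ] (hμ : FinMom p μ)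
    (hp : 0 ≤ p) {S : Set X} {s t x₀ : X} {N r₀ : ℝ} (ht : t ∈ S) (hts : t ≠ s)
    (htr : dist t x₀ ≤ r₀) (hs : 2 * N + r₀ < dist s x₀) :
    Wp p (S \ {s}) μ ≤ Wp p S μ + ∫ y in (ball x₀ N)ᶜ, (dist y x₀ + r₀) ^ p ∂μ := by
  have htT : t ∈ S \ {s} := ⟨ht, hts⟩
  have hG : Integrable ((ball x₀ N)ᶜ.indicator fun y => (dist y x₀ + r₀) ^ p) μ :=
    (hμ.integrable_dist_add_rpow hp x₀ (dist_nonneg.trans htr)).indicator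
      measurableSet_ball.compl
  have hpt : ∀ y, infDist y (S \ {s}) ^ p ≤
      infDist y S ^ p + (ball x₀ N)ᶜ.indicator (fun y => (dist y x₀ + r₀) ^ p) y := by
    intro y
    have hyt : infDist y (S \ {s}) ≤ dist y x₀ + r₀ :=
      (infDist_le_dist_of_mem htT).trans (by linarith [dist_triangle_right y t x₀])
    by_cases hy : y ∈ ball x₀ N
    · -- near `x₀`, the centre `t` is closer to `y` than the deleted centre `s`
      rw [indicator_of_notMem (notMem_compl_iff.2 hy), add_zero]
      refine Real.rpow_le_rpow infDist_nonneg ?_ hp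
      refine (le_infDist ⟨t, ht⟩).2 fun z hz => ?_
      rcases eq_or_ne z s with rfl | hzs
      · linarith [mem_ball.1 hy, dist_triangle_left z x₀ y]
      · exact infDist_le_dist_of_mem ⟨hz, hzs⟩
    · rw [indicator_of_mem hy]
      linarith [Real.rpow_le_rpow infDist_nonneg hyt hp,
        Real.rpow_nonneg (infDist_nonneg (x := y) (s := S)) p]
  calc Wp p (S \ {s}) μ
      ≤ ∫ y, infDist y S ^ p + (ball x₀ N)ᶜ.indicator (fun y => (dist y x₀ + r₀) ^ p) y ∂μ :=
        integral_mono (hμ.integrable_infDist_rpow hp ⟨t, htT⟩)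
          ((hμ.integrable_infDist_rpow hp ⟨t, ht⟩).add hG) hpt
    _ = _ := by
        rw [integral_add (hμ.integrable_infDist_rpow hp ⟨t, ht⟩) hG,
          integral_indicator measurableSet_ball.compl]
        rfl

lemma subset_closedBall_of_Wp_lt [OpensMeasurableSpace X] [IsFiniteMeasure μ] [NeZero μ]
    (hμ : FinMom p μ) (hp : 0 < p) (x₀ : X) {c η : ℝ} (hη : 0 < η)
    (hgap : ∀ T, Feas (k - 1) R T → c + η ≤ Wp p T μ) :
    ∃ r, ∀ S, Feas k R S → Wp p S μ < c → S ⊆ closedBall x₀ r := by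
  obtain ⟨r₀, hr₀, hnear⟩ := exists_dist_le_of_Wp_le hμ hp x₀ c
  obtain ⟨N, hN⟩ :=
    exists_setIntegral_compl_ball_lt (hμ.integrable_dist_add_rpow hp.le x₀ hr₀) x₀ hη
  refine ⟨2 * N + r₀, fun S hS hW s hs => ?_⟩
  by_contra hfar
  rw [mem_closedBall, not_le] at hfar
  obtain ⟨t, ht, htr⟩ := hnear S hS.2.2.1 hW.le
  have hts : t ≠ s := by
    rintro rfl
    linarith [N.cast_nonneg (α := ℝ)]
  have hT : Feas (k - 1) R (S \ {s}) :=
    ⟨sdiff_subset.trans hS.1, hS.2.1.sdiff, ⟨t, ht, hts⟩, by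
      rw [ncard_sdiff_singleton_of_mem hs]; exact Nat.sub_le_sub_right hS.2.2.2 1⟩
  linarith [hgap _ hT, Wp_diff_singleton_le hμ hp.le ht hts htr hfar]

lemma continuous_Wp [OpensMeasurableSpace X] [IsFiniteMeasure μ] (hμ : FinMom p μ)
    (hp : 0 ≤ p) : Continuous fun S : NonemptyCompacts X => Wp p S μ := by
  refine continuous_iff_continuousAt.2 fun S => ?_
  obtain ⟨s, hs⟩ := S.nonempty
  refine continuousAt_of_dominated (bound := fun y => (dist y s + 1) ^ p)
    (Eventually.of_forall fun T =>
      ((continuous_infDist_pt _).rpow_const fun _ => Or.inr hp).aestronglyMeasurable)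
    ?_ (hμ.integrable_dist_add_rpow hp s zero_le_one)
    (ae_of_all _ fun y =>
      ((lipschitz_infDist_set y).continuous.rpow_const fun _ => Or.inr hp).continuousAt)
  filter_upwards [ball_mem_nhds S one_pos] with T hT
  refine ae_of_all _ fun y => ?_
  rw [Real.norm_of_nonneg (Real.rpow_nonneg infDist_nonneg p)]
  refine Real.rpow_le_rpow infDist_nonneg ?_ hp
  calc infDist y T ≤ infDist y S + dist S T :=
        infDist_le_infDist_add_hausdorffDist (edist_ne_top S T)
    _ ≤ dist y s + 1 :=
        add_le_add (infDist_le_dist_of_mem hs) ((dist_comm S T).trans_le (mem_ball.1 hT).le)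

lemma Cp_eq_setOf_isMinOn : Cp p μ k R = {S : NonemptyCompacts X |
    Feas k R S ∧ IsMinOn (fun T : NonemptyCompacts X => Wp p T μ) {T | Feas k R T} S} := by
  ext S
  refine and_congr_right fun _ => ⟨fun h T hT => h T hT, fun h T hT => ?_⟩
  obtain ⟨K, rfl⟩ := hT.exists_nonemptyCompacts
  exact h hT

end Clustering

/-- If `(μ,k,R)` is non-singular, then `C_p(μ,k,R)` is a nonempty compact subset of the
hyperspace `K(X)` with the Hausdorff metric. -/
theorem stmt12 {X : Type*} [MetricSpace X] [ProperSpace X] [MeasurableSpace X] [BorelSpace X]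
    (p : ℝ) (hp : 1 ≤ p) (μ : Measure X) [IsProbabilityMeasure μ] (hμ : FinMom p μ)
    (k : ℕ) (hk : 1 ≤ k) (R : Set X) (hRc : IsClosed R) (hRne : R.Nonempty)
    (hns : ∀ j : ℕ, 1 ≤ j → j < k → mCost p μ (j + 1) R < mCost p μ j R) :
    (Cp p μ k R).Nonempty ∧ IsCompact (Cp p μ k R) := by
  obtain ⟨x₀, hx₀⟩ := hRne
  obtain ⟨ε, hε, hgap⟩ := exists_pos_mCost_add_le_Wp hk hns
  obtain ⟨r, hr⟩ := subset_closedBall_of_Wp_lt hμ (by linarith) x₀ (half_pos hε)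
    (c := mCost p μ k R + ε / 2) fun T hT => by linarith [hgap T hT]
  obtain ⟨S₀, hS₀, hS₀lt⟩ := exists_Wp_lt_mCost_add hk ⟨x₀, hx₀⟩ (half_pos hε)
  obtain ⟨K₀, rfl⟩ := hS₀.exists_nonemptyCompacts
  rw [Cp_eq_setOf_isMinOn]
  exact (isCompact_setOf_feas_subset_closedBall hk hRc x₀ r).nonempty_and_isCompact_setOf_isMinOn
    (continuous_Wp hμ (by linarith)) (fun S hS => hS.1) (fun S hS hlt => ⟨hS, hr S hS hlt⟩)
    ⟨K₀, hS₀, hS₀lt⟩
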